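/- Let $n \ge 3$ and $k \ge n-2$ with $k \le n$. Write points of $\mathbb{R}^n$ as $(y,z) \in \mathbb{R}^k \times \mathbb{R}^{n-k}$. Then for any $x \in \mathbb{R}^n$, $$\int_{\{\tilde{x} = (\tilde{y},\tilde{z}) : |\tilde{z}| < 1\}} \frac{d\tilde{x}}{|x - \tilde{x}|^{n-2}} = +\infty.$$ -/

import Mathlib

open Real MeasureTheory

/-- The norm of the "z-part" of a point of `ℝ^n`, i.e. of its last `n - k` coordinates. -/
noncomputable def zNorm {n : ℕ} (k : ℕ) (x : EuclideanSpace ℝ (Fin n)) : ℝ :=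
  Real.sqrt (∑ i ∈ Finset.univ.filter (fun i : Fin n => k ≤ (i : ℕ)), (x i) ^ 2)

open Set Function

/-!
Since `k ≥ n - 2`, the slab contains the thinner slab where the last two coordinates satisfy
`|tᵢ| < r`. Cut that into the disjoint boxes on which the first `d = n - 2` coordinates of
`t - x` lie in `(2 ^ m, 2 ^ (m + 1))`. The `m`-th box has volume `≍ 2 ^ (m d)` and on it
`‖x - t‖ ≲ 2 ^ m`, so the integral of `‖x - t‖ ^ (-d)` over every box is bounded below by the
same positive constant, and the integral over their union diverges.
-/

theorem MeasureTheory.setLIntegral_eq_top_of_disjoint_of_le {α : Type*} [MeasurableSpace α]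
    {μ : Measure α} {f : α → ENNReal} {s : Set α} {B : ℕ → Set α} {ε : ENNReal}
    (hB : ∀ m, MeasurableSet (B m)) (hdisj : Pairwise (Disjoint on B)) (hsub : ∀ m, B m ⊆ s)
    (hε : ε ≠ 0) (hle : ∀ m, ε ≤ ∫⁻ t in B m, f t ∂μ) :
    ∫⁻ t in s, f t ∂μ = ⊤ :=
  top_le_iff.mp <| calc
    ⊤ = ∑' _ : ℕ, ε := (ENNReal.tsum_const_eq_top_of_ne_zero hε).symm
    _ ≤ ∑' m, ∫⁻ t in B m, f t ∂μ := ENNReal.tsum_le_tsum hle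
    _ = ∫⁻ t in ⋃ m, B m, f t ∂μ := (lintegral_iUnion hB hdisj f).symm
    _ ≤ ∫⁻ t in s, f t ∂μ := lintegral_mono_set (iUnion_subset hsub)

theorem pairwise_disjoint_Ioo_add_two_pow (a : ℝ) :
    Pairwise (Disjoint on fun m : ℕ => Ioo (a + 2 ^ m) (a + 2 ^ (m + 1))) := by
  refine (pairwise_disjoint_on _).2 fun m l hml => disjoint_left.2 fun t h₁ h₂ => ?_
  have : (2 : ℝ) ^ (m + 1) ≤ 2 ^ l := pow_le_pow_right₀ one_le_two hml
  linarith [h₁.2, h₂.1]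

theorem EuclideanSpace.norm_le_sqrt_card_mul {ι : Type*} [Fintype ι] {v : EuclideanSpace ℝ ι}
    {c : ℝ} (hc : 0 ≤ c) (h : ∀ i, |v i| ≤ c) : ‖v‖ ≤ √(Fintype.card ι) * c := by
  rw [EuclideanSpace.norm_eq]
  calc √(∑ i, ‖v i‖ ^ 2) ≤ √(∑ _i : ι, c ^ 2) :=
        sqrt_le_sqrt (Finset.sum_le_sum fun i _ => pow_le_pow_left₀ (norm_nonneg _) (h i) 2)
    _ = √(Fintype.card ι) * c := by
        rw [Finset.sum_const, Finset.card_univ, nsmul_eq_mul, sqrt_mul (Nat.cast_nonneg _),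
          sqrt_sq hc]

theorem zNorm_le_sqrt_mul {n k : ℕ} {t : EuclideanSpace ℝ (Fin n)} {r : ℝ} (hr : 0 ≤ r)
    (h : ∀ i : Fin n, k ≤ (i : ℕ) → |t i| ≤ r) : zNorm k t ≤ √n * r := by
  calc zNorm k t ≤ √(∑ _i : Fin n, r ^ 2) := by
        refine sqrt_le_sqrt ((Finset.sum_le_sum fun i hi => ?_).trans
          (Finset.sum_le_sum_of_subset_of_nonneg (Finset.filter_subset _ _) fun _ _ _ => sq_nonneg r))
        rw [← sq_abs]
        exact pow_le_pow_left₀ (abs_nonneg _) (h i (Finset.mem_filter.1 hi).2) 2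
    _ = √n * r := by
        rw [Finset.sum_const, Finset.card_univ, Fintype.card_fin, nsmul_eq_mul,
          sqrt_mul (Nat.cast_nonneg _), sqrt_sq hr]

section DyadicBox

variable {n : ℕ} (d : ℕ) (x : EuclideanSpace ℝ (Fin n)) (r : ℝ)

def dyadicSide (m : ℕ) (i : Fin n) : Set ℝ :=
  if (i : ℕ) < d then Ioo (x i + 2 ^ m) (x i + 2 ^ (m + 1)) else Ioo (-r) r

def dyadicBox (m : ℕ) : Set (EuclideanSpace ℝ (Fin n)) :=
  WithLp.ofLp ⁻¹' univ.pi (dyadicSide d x r m)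

variable {d x r}

theorem mem_dyadicBox {m : ℕ} {t : EuclideanSpace ℝ (Fin n)} :
    t ∈ dyadicBox d x r m ↔ ∀ i, t i ∈ dyadicSide d x r m i := by
  simp [dyadicBox]

theorem measurableSet_pi_dyadicSide (m : ℕ) : MeasurableSet (univ.pi (dyadicSide d x r m)) :=
  MeasurableSet.univ_pi fun i => by unfold dyadicSide; split_ifs <;> exact measurableSet_Ioo

theorem measurableSet_dyadicBox (m : ℕ) : MeasurableSet (dyadicBox d x r m) :=
  (PiLp.volume_preserving_ofLp _).measurable (measurableSet_pi_dyadicSide m)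

theorem volume_dyadicBox (hdn : d ≤ n) (hr : 0 ≤ r) (m : ℕ) :
    volume (dyadicBox d x r m) = ENNReal.ofReal ((2 ^ m) ^ d * (2 * r) ^ (n - d)) := by
  have hside (i : Fin n) :
      volume (dyadicSide d x r m i) = ENNReal.ofReal (if (i : ℕ) < d then 2 ^ m else 2 * r) := by
    unfold dyadicSide
    split_ifs <;> rw [Real.volume_Ioo] <;> ring_nf
  rw [dyadicBox, (PiLp.volume_preserving_ofLp _).measure_preimage
    (measurableSet_pi_dyadicSide m).nullMeasurableSet, volume_pi_pi]
  simp only [hside]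
  rw [← ENNReal.ofReal_prod_of_nonneg (fun i _ => by split_ifs <;> positivity),
    Finset.prod_ite, Finset.prod_const, Finset.prod_const, Fin.card_filter_val_lt,
    Finset.filter_not, Finset.card_sdiff, Finset.inter_univ, Fin.card_filter_val_lt]
  simp [hdn]

theorem dyadicBox_subset_setOf_abs_lt (m : ℕ) :
    dyadicBox d x r m ⊆ {t | ∀ i : Fin n, d ≤ (i : ℕ) → |t i| < r} := by
  intro t ht i hi
  have := mem_dyadicBox.1 ht i
  simp only [dyadicSide, not_lt.2 hi, if_false] at this
  exact abs_lt.2 this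

theorem dyadicBox_subset_preimage_Ioo {i : Fin n} (hi : (i : ℕ) < d) (m : ℕ) :
    dyadicBox d x r m ⊆ (fun t => t i) ⁻¹' Ioo (x i + 2 ^ m) (x i + 2 ^ (m + 1)) :=
  fun t ht => by simpa [dyadicSide, hi] using mem_dyadicBox.1 ht i

theorem pairwise_disjoint_dyadicBox (hd : 0 < d) (hdn : d ≤ n) :
    Pairwise (Disjoint on dyadicBox d x r) := fun m l hml =>
  ((pairwise_disjoint_Ioo_add_two_pow (x ⟨0, by omega⟩) hml).preimage _).mono
    (dyadicBox_subset_preimage_Ioo hd m) (dyadicBox_subset_preimage_Ioo hd l)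

theorem norm_sub_pos_of_mem_dyadicBox (hd : 0 < d) (hdn : d ≤ n) {m : ℕ}
    {t : EuclideanSpace ℝ (Fin n)} (ht : t ∈ dyadicBox d x r m) : 0 < ‖x - t‖ := by
  have h₀ := (dyadicBox_subset_preimage_Ioo (i := ⟨0, by omega⟩) hd m ht).1
  refine norm_pos_iff.2 fun h => ?_
  have : x ⟨0, by omega⟩ = t ⟨0, by omega⟩ := by rw [sub_eq_zero.1 h]
  linarith [(by positivity : (0 : ℝ) < 2 ^ m)]

theorem norm_sub_le_of_mem_dyadicBox (hr : 0 ≤ r) {m : ℕ} {t : EuclideanSpace ℝ (Fin n)}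
    (ht : t ∈ dyadicBox d x r m) : ‖x - t‖ ≤ √n * (‖x‖ + r + 2) * 2 ^ m := by
  have h2m : (1 : ℝ) ≤ 2 ^ m := one_le_pow₀ one_le_two
  have hx : 0 ≤ ‖x‖ := norm_nonneg x
  rw [mul_assoc]
  refine (EuclideanSpace.norm_le_sqrt_card_mul (c := (‖x‖ + r + 2) * 2 ^ m) (by positivity)
    fun i => ?_).trans_eq (by rw [Fintype.card_fin])
  have hti := mem_dyadicBox.1 ht i
  rw [PiLp.sub_apply]
  unfold dyadicSide at hti
  split_ifs at hti
  · rw [abs_sub_comm, abs_of_pos (by linarith [hti.1, (by positivity : (0 : ℝ) < 2 ^ m)])]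
    nlinarith [hti.2, pow_succ (2 : ℝ) m]
  · calc |x i - t i| ≤ |x i| + |t i| := abs_sub _ _
      _ ≤ ‖x‖ + r := add_le_add (PiLp.norm_apply_le x i) (abs_lt.2 hti).le
      _ ≤ (‖x‖ + r + 2) * 2 ^ m := by nlinarith

theorem ofReal_le_setLIntegral_dyadicBox (hd : 0 < d) (hdn : d ≤ n) (hr : 0 ≤ r) (m : ℕ) :
    ENNReal.ofReal ((2 * r) ^ (n - d) / (√n * (‖x‖ + r + 2)) ^ d) ≤
      ∫⁻ t in dyadicBox d x r m, ENNReal.ofReal (1 / ‖x - t‖ ^ d) := by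
  set R := √n * (‖x‖ + r + 2)
  have hR : 0 < R := by
    have : (0 : ℝ) < n := by exact_mod_cast hd.trans_le hdn
    positivity
  have hbound : ∀ t ∈ dyadicBox d x r m,
      ENNReal.ofReal (1 / (R * 2 ^ m) ^ d) ≤ ENNReal.ofReal (1 / ‖x - t‖ ^ d) := fun t ht =>
    ENNReal.ofReal_le_ofReal <| one_div_le_one_div_of_le
      (pow_pos (norm_sub_pos_of_mem_dyadicBox hd hdn ht) d)
      (pow_le_pow_left₀ (norm_nonneg _) (norm_sub_le_of_mem_dyadicBox hr ht) d)
  calc ENNReal.ofReal ((2 * r) ^ (n - d) / R ^ d)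
      = ENNReal.ofReal (1 / (R * 2 ^ m) ^ d) * volume (dyadicBox d x r m) := by
        rw [volume_dyadicBox hdn hr, ← ENNReal.ofReal_mul (by positivity)]
        congr 1
        field_simp
        rw [mul_pow R, mul_assoc]
    _ = ∫⁻ t in dyadicBox d x r m, ENNReal.ofReal (1 / (R * 2 ^ m) ^ d) :=
        (setLIntegral_const _ _).symm
    _ ≤ ∫⁻ t in dyadicBox d x r m, ENNReal.ofReal (1 / ‖x - t‖ ^ d) :=
        setLIntegral_mono' (measurableSet_dyadicBox m) hbound

end DyadicBox

theorem setLIntegral_one_div_norm_sub_pow_eq_top {n d : ℕ} (hd : 0 < d) (hdn : d ≤ n) {r : ℝ}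
    (hr : 0 < r) (x : EuclideanSpace ℝ (Fin n)) :
    ∫⁻ t in {t : EuclideanSpace ℝ (Fin n) | ∀ i : Fin n, d ≤ (i : ℕ) → |t i| < r},
      ENNReal.ofReal (1 / ‖x - t‖ ^ d) = ⊤ := by
  have hn : (0 : ℝ) < n := by exact_mod_cast hd.trans_le hdn
  exact setLIntegral_eq_top_of_disjoint_of_le measurableSet_dyadicBox
    (pairwise_disjoint_dyadicBox hd hdn) dyadicBox_subset_setOf_abs_lt
    (ENNReal.ofReal_pos.2 (by positivity)).ne' (ofReal_le_setLIntegral_dyadicBox hd hdn hr.le)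

theorem stmt_4 {n k : ℕ} (hn : 3 ≤ n) (hk : n - 2 ≤ k)
    (x : EuclideanSpace ℝ (Fin n)) :
    ∫⁻ t in {t : EuclideanSpace ℝ (Fin n) | zNorm k t < 1},
      ENNReal.ofReal (1 / ‖x - t‖ ^ ((n : ℝ) - 2)) = ⊤ := by
  have hsqrt : 0 < √(n : ℝ) := sqrt_pos.2 (by positivity)
  have hslab : {t : EuclideanSpace ℝ (Fin n) | ∀ i : Fin n, n - 2 ≤ (i : ℕ) → |t i| < 1 / (2 * √n)}
      ⊆ {t | zNorm k t < 1} := fun t ht => by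
    have hz := zNorm_le_sqrt_mul (by positivity) fun i hi => (ht i (hk.trans hi)).le
    have : √(n : ℝ) * (1 / (2 * √n)) = 1 / 2 := by field_simp
    exact show zNorm k t < 1 by linarith
  have hexp (t : EuclideanSpace ℝ (Fin n)) : ‖x - t‖ ^ ((n : ℝ) - 2) = ‖x - t‖ ^ (n - 2) := by
    rw [← rpow_natCast, Nat.cast_sub (by omega), Nat.cast_ofNat]
  simp_rw [hexp]
  exact eq_top_mono (lintegral_mono_set hslab)
    (setLIntegral_one_div_norm_sub_pow_eq_top (by omega) (Nat.sub_le n 2) (by positivity) x)
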